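/- Let γ > 0, and let φ⁻ be locally absolutely continuous on (0,∞) with ∫₀^∞ r^{-2γ} |∂_r(r^{γ} φ⁻(r))|² dr < ∞. Then there exists a constant A⁻ ∈ ℂ such that lim_{r→0} |φ⁻(r) − A⁻ r^{−γ}| r^{−1/2} = 0 and ∫₀^∞ |φ⁻(r) − A⁻ r^{−γ}|²/r² dr ≤ 4/(2γ+1)² · ∫₀^∞ r^{−2γ} |∂_r(r^{γ} φ⁻(r))|² dr. -/

import Mathlib

/-!
Put `ψ r = r ^ γ * φ r`, so `ψ' = g'`. Cauchy–Schwarz on `(0, r]` with weight `s ^ (-2γ)` gives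
`(∫₀ʳ |g'|)² ≤ r ^ (2γ + 1) / (2γ + 1) · ∫₀ʳ s ^ (-2γ) |g'|²`, so `g'` is integrable near `0`,
`A = lim_{r → 0} ψ r` exists and `φ r - A r ^ (-γ) = r ^ (-γ) ∫₀ʳ g'`. The same bound, together
with `∫₀ʳ s ^ (-2γ) |g'|² → 0`, gives the trace estimate, and the weighted Hardy inequality
`∫₀^∞ r ^ (-α - 2) (∫₀ʳ G)² ≤ 4 / (α + 1)² ∫₀^∞ s ^ (-α) G²` (with `α = 2γ`) gives the integral
bound.
-/

open MeasureTheory Set Filter Topology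
open scoped ENNReal

lemma setLIntegral_Ioc_zero_rpow {β r : ℝ} (hβ : -1 < β) (hr : 0 ≤ r) :
    ∫⁻ s in Ioc 0 r, ENNReal.ofReal (s ^ β) = ENNReal.ofReal (r ^ (β + 1) / (β + 1)) := by
  rw [← ofReal_integral_eq_lintegral_ofReal, ← intervalIntegral.integral_of_le hr,
    integral_rpow (Or.inl hβ), Real.zero_rpow (by linarith), sub_zero]
  · exact (intervalIntegrable_iff_integrableOn_Ioc_of_le hr).mp
      (intervalIntegral.intervalIntegrable_rpow' hβ)
  · filter_upwards [ae_restrict_mem measurableSet_Ioc] with s hs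
    exact Real.rpow_nonneg hs.1.le _

lemma setLIntegral_Ioi_rpow_of_lt {c s : ℝ} (hc : c < -1) (hs : 0 < s) :
    ∫⁻ r in Ioi s, ENNReal.ofReal (r ^ c) = ENNReal.ofReal (-s ^ (c + 1) / (c + 1)) := by
  rw [← ofReal_integral_eq_lintegral_ofReal (integrableOn_Ioi_rpow_of_lt hc hs),
    integral_Ioi_rpow_of_lt hc hs]
  filter_upwards [ae_restrict_mem measurableSet_Ioi] with r hr
  exact Real.rpow_nonneg (hs.trans hr).le _

lemma sq_setLIntegral_Ioc_le {G : ℝ → ℝ≥0∞} {β r : ℝ}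
    (hG : AEMeasurable G (volume.restrict (Ioc 0 r))) (hβ : -1 < β) (hr : 0 ≤ r) :
    (∫⁻ s in Ioc 0 r, G s) ^ 2 ≤
      (∫⁻ s in Ioc 0 r, ENNReal.ofReal (s ^ (-β)) * G s ^ 2) *
        ENNReal.ofReal (r ^ (β + 1) / (β + 1)) := by
  have hsqrt : ∀ x y : ℝ≥0∞, x ^ (1 / 2 : ℝ) * y ^ (1 / 2 : ℝ) = (x * y) ^ (1 / 2 : ℝ) :=
    fun x y => (ENNReal.mul_rpow_of_nonneg _ _ (by norm_num)).symm
  have hG_eq : ∀ s ∈ Ioc (0 : ℝ) r,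
      (ENNReal.ofReal (s ^ (-β)) * G s ^ 2) ^ (1 / 2 : ℝ) * ENNReal.ofReal (s ^ β) ^ (1 / 2 : ℝ)
        = G s := by
    intro s hs
    rw [hsqrt, mul_right_comm, ← ENNReal.ofReal_mul (Real.rpow_nonneg hs.1.le _),
      ← Real.rpow_add hs.1, neg_add_cancel, Real.rpow_zero, ENNReal.ofReal_one, one_mul,
      ← ENNReal.rpow_natCast, ← ENNReal.rpow_mul]
    norm_num
  calc (∫⁻ s in Ioc 0 r, G s) ^ 2
      = (∫⁻ s in Ioc 0 r, (ENNReal.ofReal (s ^ (-β)) * G s ^ 2) ^ (1 / 2 : ℝ) *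
          ENNReal.ofReal (s ^ β) ^ (1 / 2 : ℝ)) ^ 2 := by
        rw [setLIntegral_congr_fun measurableSet_Ioc hG_eq]
    _ ≤ ((∫⁻ s in Ioc 0 r, ENNReal.ofReal (s ^ (-β)) * G s ^ 2) ^ (1 / 2 : ℝ) *
          (∫⁻ s in Ioc 0 r, ENNReal.ofReal (s ^ β)) ^ (1 / 2 : ℝ)) ^ 2 := by
        gcongr
        exact ENNReal.lintegral_mul_norm_pow_le (by fun_prop) (by fun_prop) (by norm_num)
          (by norm_num) (by norm_num)
    _ = _ := by
        rw [hsqrt, ← ENNReal.rpow_natCast, ← ENNReal.rpow_mul, setLIntegral_Ioc_zero_rpow hβ hr]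
        norm_num

lemma lintegral_mul_setLIntegral_Iic_swap {μ : Measure ℝ} [SFinite μ] {k h : ℝ → ℝ≥0∞}
    (hk : AEMeasurable k μ) (hh : AEMeasurable h μ) :
    ∫⁻ r, k r * ∫⁻ s in Iic r, h s ∂μ ∂μ = ∫⁻ s, h s * ∫⁻ r in Ici s, k r ∂μ ∂μ := by
  set F : ℝ → ℝ → ℝ≥0∞ := fun r s =>
    {p : ℝ × ℝ | p.2 ≤ p.1}.indicator (fun p => k p.1 * h p.2) (r, s)
  have hF : AEMeasurable (Function.uncurry F) (μ.prod μ) :=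
    ((hk.comp_quasiMeasurePreserving Measure.quasiMeasurePreserving_fst).mul
      (hh.comp_quasiMeasurePreserving Measure.quasiMeasurePreserving_snd)).indicator
      (measurableSet_le measurable_snd measurable_fst)
  calc ∫⁻ r, k r * ∫⁻ s in Iic r, h s ∂μ ∂μ = ∫⁻ r, ∫⁻ s, F r s ∂μ ∂μ := by
        refine lintegral_congr fun r => ?_
        rw [← lintegral_const_mul'' _ hh.restrict, ← lintegral_indicator measurableSet_Iic]
        rfl
    _ = ∫⁻ s, ∫⁻ r, F r s ∂μ ∂μ := lintegral_lintegral_swap hF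
    _ = ∫⁻ s, h s * ∫⁻ r in Ici s, k r ∂μ ∂μ := by
        refine lintegral_congr fun s => ?_
        rw [mul_comm, ← lintegral_mul_const'' _ hk.restrict,
          ← lintegral_indicator measurableSet_Ici]
        rfl

lemma setLIntegral_rpow_mul_setLIntegral_Ioc {c : ℝ} (hc : 0 < c) {h : ℝ → ℝ≥0∞}
    (hh : AEMeasurable h (volume.restrict (Ioi 0))) :
    ∫⁻ r in Ioi 0, ENNReal.ofReal (r ^ (-c - 1)) * ∫⁻ s in Ioc 0 r, h s =
      ENNReal.ofReal (1 / c) * ∫⁻ s in Ioi 0, ENNReal.ofReal (s ^ (-c)) * h s := by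
  have hIoc : ∀ r : ℝ, ∫⁻ s in Ioc 0 r, h s = ∫⁻ s in Iic r, h s ∂volume.restrict (Ioi 0) := by
    intro r
    rw [Measure.restrict_restrict measurableSet_Iic, inter_comm, Ioi_inter_Iic]
  have hinner : ∀ s ∈ Ioi (0 : ℝ),
      h s * ∫⁻ r in Ici s, ENNReal.ofReal (r ^ (-c - 1)) ∂volume.restrict (Ioi 0) =
        ENNReal.ofReal (1 / c) * (ENNReal.ofReal (s ^ (-c)) * h s) := by
    intro s (hs : 0 < s)
    rw [Measure.restrict_restrict measurableSet_Ici, inter_eq_left.mpr (Ici_subset_Ioi.mpr hs),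
      setLIntegral_congr Ioi_ae_eq_Ici.symm, setLIntegral_Ioi_rpow_of_lt (by linarith) hs,
      sub_add_cancel, neg_div_neg_eq, div_eq_mul_one_div, ENNReal.ofReal_mul (by positivity)]
    ring
  simp_rw [hIoc]
  rw [lintegral_mul_setLIntegral_Iic_swap (by fun_prop) hh,
    setLIntegral_congr_fun measurableSet_Ioi hinner, lintegral_const_mul' _ _ ENNReal.ofReal_ne_top]

-- Cauchy–Schwarz against the weight `s ^ (c - 1)` with `c = (α + 1) / 2`, then Tonelli.
theorem setLIntegral_rpow_mul_sq_setLIntegral_Ioc_le {α : ℝ} (hα : -1 < α) {G : ℝ → ℝ≥0∞}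
    (hG : AEMeasurable G (volume.restrict (Ioi 0))) :
    ∫⁻ r in Ioi 0, ENNReal.ofReal (r ^ (-α - 2)) * (∫⁻ s in Ioc 0 r, G s) ^ 2 ≤
      ENNReal.ofReal (4 / (α + 1) ^ 2) * ∫⁻ s in Ioi 0, ENNReal.ofReal (s ^ (-α)) * G s ^ 2 := by
  obtain ⟨c, hc, rfl⟩ : ∃ c, 0 < c ∧ α = 2 * c - 1 := ⟨(α + 1) / 2, by linarith, by ring⟩
  have hCS : ∀ r ∈ Ioi (0 : ℝ),
      ENNReal.ofReal (r ^ (-(2 * c - 1) - 2)) * (∫⁻ s in Ioc 0 r, G s) ^ 2 ≤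
        ENNReal.ofReal (1 / c) * (ENNReal.ofReal (r ^ (-c - 1)) *
          ∫⁻ s in Ioc 0 r, ENNReal.ofReal (s ^ (1 - c)) * G s ^ 2) := by
    intro r (hr : 0 < r)
    have hsq := sq_setLIntegral_Ioc_le (hG.mono_set Ioc_subset_Ioi_self) (β := c - 1)
      (by linarith) hr.le
    rw [neg_sub, sub_add_cancel] at hsq
    have hpow : r ^ (-(2 * c - 1) - 2) * (r ^ c / c) = 1 / c * r ^ (-c - 1) := by
      rw [mul_div_assoc', ← Real.rpow_add hr]
      ring_nf
    calc _ ≤ ENNReal.ofReal (r ^ (-(2 * c - 1) - 2)) *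
          ((∫⁻ s in Ioc 0 r, ENNReal.ofReal (s ^ (1 - c)) * G s ^ 2) *
            ENNReal.ofReal (r ^ c / c)) := by gcongr
      _ = _ := by
          rw [mul_left_comm, ← ENNReal.ofReal_mul (Real.rpow_nonneg hr.le _), hpow,
            ENNReal.ofReal_mul (by positivity)]
          ring
  have hpow : ∀ s ∈ Ioi (0 : ℝ), ENNReal.ofReal (s ^ (-c)) * (ENNReal.ofReal (s ^ (1 - c)) *
      G s ^ 2) = ENNReal.ofReal (s ^ (-(2 * c - 1))) * G s ^ 2 := by
    intro s (hs : 0 < s)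
    rw [← mul_assoc, ← ENNReal.ofReal_mul (Real.rpow_nonneg hs.le _), ← Real.rpow_add hs]
    ring_nf
  calc _ ≤ ∫⁻ r in Ioi 0, ENNReal.ofReal (1 / c) * (ENNReal.ofReal (r ^ (-c - 1)) *
          ∫⁻ s in Ioc 0 r, ENNReal.ofReal (s ^ (1 - c)) * G s ^ 2) :=
        setLIntegral_mono' measurableSet_Ioi hCS
    _ = ENNReal.ofReal (1 / c) * (ENNReal.ofReal (1 / c) *
          ∫⁻ s in Ioi 0, ENNReal.ofReal (s ^ (-(2 * c - 1))) * G s ^ 2) := by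
        rw [lintegral_const_mul' _ _ ENNReal.ofReal_ne_top,
          setLIntegral_rpow_mul_setLIntegral_Ioc hc (by fun_prop),
          setLIntegral_congr_fun measurableSet_Ioi hpow]
    _ = _ := by
        rw [← mul_assoc, ← ENNReal.ofReal_mul (by positivity)]
        congr 2
        field_simp
        ring

lemma ofReal_rpow_mul_norm_sq {E : Type*} [NormedAddCommGroup E] {s : ℝ} (hs : 0 ≤ s) (a : ℝ)
    (x : E) : ENNReal.ofReal (s ^ a * ‖x‖ ^ 2) = ENNReal.ofReal (s ^ a) * ‖x‖ₑ ^ 2 := by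
  rw [ENNReal.ofReal_mul (Real.rpow_nonneg hs _), ENNReal.ofReal_pow (norm_nonneg _), ofReal_norm]

section Primitive

variable {E : Type*} [NormedAddCommGroup E] {f : ℝ → E} {α : ℝ}

lemma locallyIntegrableOn_Ioi_of_intervalIntegrable
    (hf : ∀ s ∈ Ioi (0 : ℝ), ∀ t ∈ Ioi (0 : ℝ), IntervalIntegrable f volume s t) :
    LocallyIntegrableOn f (Ioi 0) := by
  intro x (hx : 0 < x)
  refine ⟨Ioo (x / 2) (2 * x),
    mem_nhdsWithin_of_mem_nhds (Ioo_mem_nhds (by linarith) (by linarith)), ?_⟩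
  exact (intervalIntegrable_iff_integrableOn_Ioo_of_le (by linarith)).mp
    (hf _ (half_pos hx) _ (by simp only [mem_Ioi]; linarith))

lemma sq_setLIntegral_Ioc_enorm_le {r : ℝ} (hf : AEStronglyMeasurable f (volume.restrict (Ioc 0 r)))
    (hα : -1 < α) (hr : 0 ≤ r) :
    (∫⁻ s in Ioc 0 r, ‖f s‖ₑ) ^ 2 ≤
      (∫⁻ s in Ioc 0 r, ENNReal.ofReal (s ^ (-α) * ‖f s‖ ^ 2)) *
        ENNReal.ofReal (r ^ (α + 1) / (α + 1)) := by
  rw [setLIntegral_congr_fun measurableSet_Ioc fun s hs => ofReal_rpow_mul_norm_sq hs.1.le _ _]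
  exact sq_setLIntegral_Ioc_le hf.enorm hα hr

lemma integrableOn_Ioc_of_setLIntegral_rpow_mul_norm_sq_ne_top
    (hf : AEStronglyMeasurable f (volume.restrict (Ioi 0))) (hα : -1 < α)
    (hfin : ∫⁻ s in Ioi 0, ENNReal.ofReal (s ^ (-α) * ‖f s‖ ^ 2) ≠ ⊤) {r : ℝ} (hr : 0 ≤ r) :
    IntegrableOn f (Ioc 0 r) := by
  refine ⟨hf.mono_set Ioc_subset_Ioi_self, ?_⟩
  have hsq : (∫⁻ s in Ioc 0 r, ‖f s‖ₑ) ^ 2 < ⊤ :=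
    (sq_setLIntegral_Ioc_enorm_le (hf.mono_set Ioc_subset_Ioi_self) hα hr).trans_lt
      (ENNReal.mul_lt_top ((lintegral_mono_set Ioc_subset_Ioi_self).trans_lt hfin.lt_top)
        ENNReal.ofReal_lt_top)
  exact (ENNReal.pow_lt_top_iff.mp hsq).resolve_right two_ne_zero

variable [NormedSpace ℝ E]

lemma enorm_intervalIntegral_sq_le {r : ℝ}
    (hf : AEStronglyMeasurable f (volume.restrict (Ioc 0 r))) (hα : -1 < α) (hr : 0 ≤ r) :
    ‖∫ s in 0..r, f s‖ₑ ^ 2 ≤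
      (∫⁻ s in Ioc 0 r, ENNReal.ofReal (s ^ (-α) * ‖f s‖ ^ 2)) *
        ENNReal.ofReal (r ^ (α + 1) / (α + 1)) := by
  rw [intervalIntegral.integral_of_le hr]
  exact (pow_le_pow_left' (enorm_integral_le_lintegral_enorm _) 2).trans
    (sq_setLIntegral_Ioc_enorm_le hf hα hr)

lemma tendsto_norm_intervalIntegral_mul_rpow
    (hf : AEStronglyMeasurable f (volume.restrict (Ioi 0))) (hα : -1 < α)
    (hfin : ∫⁻ s in Ioi 0, ENNReal.ofReal (s ^ (-α) * ‖f s‖ ^ 2) ≠ ⊤) :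
    Tendsto (fun r => ‖∫ s in 0..r, f s‖ * r ^ (-(α + 1) / 2)) (𝓝[>] 0) (𝓝 0) := by
  set T : ℝ → ℝ≥0∞ := fun r => ∫⁻ s in Ioc 0 r, ENNReal.ofReal (s ^ (-α) * ‖f s‖ ^ 2)
  have hT : Tendsto T (𝓝[>] 0) (𝓝 0) := by
    have hvol : Tendsto (fun r : ℝ => volume.restrict (Ioi 0) (Ioc 0 r)) (𝓝[>] 0) (𝓝 0) := by
      have h0 := (ENNReal.continuous_ofReal.tendsto 0).mono_left (nhdsWithin_le_nhds (s := Ioi 0))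
      rw [ENNReal.ofReal_zero] at h0
      refine h0.congr fun r => ?_
      rw [Measure.restrict_apply measurableSet_Ioc, inter_eq_left.mpr Ioc_subset_Ioi_self,
        Real.volume_Ioc, sub_zero]
    have := tendsto_setLIntegral_zero hfin hvol
    simpa only [Measure.restrict_restrict measurableSet_Ioc,
      inter_eq_left.mpr Ioc_subset_Ioi_self] using this
  have hbound : ∀ r ∈ Ioi (0 : ℝ),
      ‖∫ s in 0..r, f s‖ * r ^ (-(α + 1) / 2) ≤ √((T r).toReal / (α + 1)) := by
    intro r (hr : 0 < r)
    have hTr : T r ≠ ⊤ := ((lintegral_mono_set Ioc_subset_Ioi_self).trans_lt hfin.lt_top).ne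
    have hsq : ‖∫ s in 0..r, f s‖ ^ 2 ≤ (T r).toReal * (r ^ (α + 1) / (α + 1)) := by
      have := ENNReal.toReal_mono (ENNReal.mul_ne_top hTr ENNReal.ofReal_ne_top)
        (enorm_intervalIntegral_sq_le (hf.mono_set Ioc_subset_Ioi_self) hα hr.le)
      rwa [ENNReal.toReal_mul, ENNReal.toReal_pow, toReal_enorm,
        ENNReal.toReal_ofReal (div_nonneg (Real.rpow_nonneg hr.le _) (by linarith))] at this
    have hpow : (r ^ (-(α + 1) / 2)) ^ 2 * r ^ (α + 1) = 1 := by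
      rw [← Real.rpow_natCast, ← Real.rpow_mul hr.le, ← Real.rpow_add hr,
        show -(α + 1) / 2 * ((2 : ℕ) : ℝ) + (α + 1) = 0 by push_cast; ring, Real.rpow_zero]
    apply Real.le_sqrt_of_sq_le
    calc (‖∫ s in 0..r, f s‖ * r ^ (-(α + 1) / 2)) ^ 2
        = ‖∫ s in 0..r, f s‖ ^ 2 * (r ^ (-(α + 1) / 2)) ^ 2 := mul_pow _ _ _
      _ ≤ (T r).toReal * (r ^ (α + 1) / (α + 1)) * (r ^ (-(α + 1) / 2)) ^ 2 := by gcongr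
      _ = (T r).toReal / (α + 1) * ((r ^ (-(α + 1) / 2)) ^ 2 * r ^ (α + 1)) := by ring
      _ = (T r).toReal / (α + 1) := by rw [hpow, mul_one]
  refine squeeze_zero' ?_ (eventually_nhdsWithin_of_forall hbound) ?_
  · filter_upwards [self_mem_nhdsWithin] with r (hr : 0 < r)
    positivity
  · simpa using (((ENNReal.tendsto_toReal ENNReal.zero_ne_top).comp hT).div_const (α + 1)).sqrt

theorem setLIntegral_rpow_mul_norm_intervalIntegral_sq_le
    (hf : AEStronglyMeasurable f (volume.restrict (Ioi 0))) (hα : -1 < α) :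
    ∫⁻ r in Ioi 0, ENNReal.ofReal (r ^ (-α - 2) * ‖∫ s in 0..r, f s‖ ^ 2) ≤
      ENNReal.ofReal (4 / (α + 1) ^ 2) *
        ∫⁻ s in Ioi 0, ENNReal.ofReal (s ^ (-α) * ‖f s‖ ^ 2) := by
  calc _ ≤ ∫⁻ r in Ioi 0, ENNReal.ofReal (r ^ (-α - 2)) * (∫⁻ s in Ioc 0 r, ‖f s‖ₑ) ^ 2 := by
        refine setLIntegral_mono' measurableSet_Ioi fun r (hr : 0 < r) => ?_
        rw [ofReal_rpow_mul_norm_sq hr.le, intervalIntegral.integral_of_le hr.le]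
        gcongr
        exact enorm_integral_le_lintegral_enorm _
    _ ≤ _ := setLIntegral_rpow_mul_sq_setLIntegral_Ioc_le hα hf.enorm
    _ = _ := by
        rw [setLIntegral_congr_fun measurableSet_Ioi fun s (hs : 0 < s) =>
          ofReal_rpow_mul_norm_sq hs.le (-α) (f s)]

lemma exists_sub_eq_intervalIntegral {ψ : ℝ → E} (hf : ∀ r, 0 ≤ r → IntegrableOn f (Ioc 0 r))
    (hψ : ∀ s ∈ Ioi (0 : ℝ), ∀ t ∈ Ioi (0 : ℝ), ψ t - ψ s = ∫ u in s..t, f u) :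
    ∃ A, ∀ r ∈ Ioi (0 : ℝ), ψ r - A = ∫ s in 0..r, f s := by
  have hf' : ∀ r, 0 ≤ r → IntervalIntegrable f volume 0 r :=
    fun r hr => (intervalIntegrable_iff_integrableOn_Ioc_of_le hr).mpr (hf r hr)
  refine ⟨ψ 1 - ∫ s in 0..1, f s, fun r (hr : 0 < r) => ?_⟩
  rw [← intervalIntegral.integral_add_adjacent_intervals (hf' 1 zero_le_one)
    ((hf' 1 zero_le_one).symm.trans (hf' r hr.le)), ← hψ 1 (mem_Ioi.2 one_pos) r hr]
  abel

end Primitive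

/-- Let `γ > 0` and let `φ⁻` be such that `r^γ φ⁻` is locally absolutely continuous on
`(0,∞)` with derivative `g'` satisfying `∫₀^∞ r^{-2γ} |∂_r(r^γ φ⁻)|² dr < ∞`. Then there is
`A⁻ ∈ ℂ` with `|φ⁻(r) - A⁻ r^{-γ}| r^{-1/2} → 0` as `r → 0⁺` and
`∫₀^∞ |φ⁻(r) - A⁻ r^{-γ}|²/r² dr ≤ 4/(2γ+1)² ∫₀^∞ r^{-2γ} |∂_r(r^γ φ⁻)|² dr`. -/
theorem stmt_15 (γ : ℝ) (hγ : 0 < γ) (φ g' : ℝ → ℂ)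
    (hloc : ∀ s ∈ Ioi (0:ℝ), ∀ t ∈ Ioi (0:ℝ), IntervalIntegrable g' volume s t)
    (hFTC : ∀ s ∈ Ioi (0:ℝ), ∀ t ∈ Ioi (0:ℝ),
      ((t ^ γ : ℝ) : ℂ) * φ t - ((s ^ γ : ℝ) : ℂ) * φ s = ∫ r in s..t, g' r)
    (hint : ∫⁻ r in Ioi (0:ℝ), ENNReal.ofReal (r ^ (-(2*γ)) * ‖g' r‖^2) < ⊤) :
    ∃ A : ℂ,
      Tendsto (fun r : ℝ => ‖φ r - A * ((r ^ (-γ) : ℝ) : ℂ)‖ * r ^ (-(1:ℝ)/2))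
        (𝓝[>] (0:ℝ)) (𝓝 0) ∧
      ∫⁻ r in Ioi (0:ℝ), ENNReal.ofReal (‖φ r - A * ((r ^ (-γ) : ℝ) : ℂ)‖^2 / r^2)
        ≤ ENNReal.ofReal (4 / (2*γ+1)^2) *
            ∫⁻ r in Ioi (0:ℝ), ENNReal.ofReal (r ^ (-(2*γ)) * ‖g' r‖^2) := by
  have hα : -1 < 2 * γ := by linarith
  have hg' : AEStronglyMeasurable g' (volume.restrict (Ioi 0)) :=
    (locallyIntegrableOn_Ioi_of_intervalIntegrable hloc).aestronglyMeasurable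
  obtain ⟨A, hA⟩ := exists_sub_eq_intervalIntegral
    (fun r hr => integrableOn_Ioc_of_setLIntegral_rpow_mul_norm_sq_ne_top hg' hα hint.ne hr) hFTC
  have hnorm : ∀ r ∈ Ioi (0 : ℝ),
      ‖φ r - A * ((r ^ (-γ) : ℝ) : ℂ)‖ = r ^ (-γ) * ‖∫ s in 0..r, g' s‖ := by
    intro r (hr : 0 < r)
    have hinv : ((r ^ (-γ) : ℝ) : ℂ) * ((r ^ γ : ℝ) : ℂ) = 1 := by
      rw [← Complex.ofReal_mul, ← Real.rpow_add hr, neg_add_cancel, Real.rpow_zero,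
        Complex.ofReal_one]
    rw [← hA r hr, show φ r - A * ((r ^ (-γ) : ℝ) : ℂ) =
        ((r ^ (-γ) : ℝ) : ℂ) * (((r ^ γ : ℝ) : ℂ) * φ r - A) by linear_combination (-φ r) * hinv,
      norm_mul, Complex.norm_real, Real.norm_of_nonneg (Real.rpow_nonneg hr.le _)]
  refine ⟨A, ?_, ?_⟩
  · refine (tendsto_norm_intervalIntegral_mul_rpow hg' hα hint.ne).congr' ?_
    filter_upwards [self_mem_nhdsWithin] with r (hr : 0 < r)
    rw [hnorm r hr, mul_comm (r ^ (-γ)), mul_assoc, ← Real.rpow_add hr]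
    ring_nf
  · refine le_of_eq_of_le (setLIntegral_congr_fun measurableSet_Ioi fun r (hr : 0 < r) => ?_)
      (setLIntegral_rpow_mul_norm_intervalIntegral_sq_le hg' hα)
    rw [hnorm r hr, Real.rpow_sub hr, Real.rpow_two,
      show -(2 * γ) = -γ * (2 : ℕ) by push_cast; ring, Real.rpow_mul_natCast hr.le]
    ring_nf
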